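/- arXiv:2206.06345 — 2 statements merged into one kernel-verified Lean document; each statement's English description precedes it below -/
import Mathlib

section
/- (Corollary 3.2.) Let L be a nonempty set with a partial order ≼ and a multiplicative G_M-metric G such that (L, G) is multiplicative G_M-complete. Let F : L → L, x₀ ∈ L, η ∈ [0,1) and γ > 0. Assume: (i) F x ≼ x for every x ∈ L; (ii) G(Fx, Fy, Fz) ≤ G(x,y,z)^η for all x, y, z in the closed ball B̄(x₀, γ); (iii) G(x₀, Fx₀, Fx₀) ≤ γ^{1−η}; (iv) whenever a nonincreasing sequence (x_n) multiplicative G_M-converges to a point s, then s ≼ x_n for every n. Then there exists x* ∈ B̄(x₀, γ) with F x* = x* and G(x*, x*, x*) = 1. Moreover, if every two points of B̄(x₀, γ) have a lower bound belonging to B̄(x₀, γ), then x* is the unique fixed point of F in B̄(x₀, γ). -/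
structure IsMultGMetric {Z : Type*} (G : Z → Z → Z → ℝ) : Prop where
  pos : ∀ x y z, 0 < G x y z
  eq_one : ∀ x y z, x = y → y = z → G x y z = 1
  one_lt : ∀ x y, x ≠ y → 1 < G x x y
  le_of_ne : ∀ x y z, y ≠ z → G x x y ≤ G x y z
  perm : ∀ x y z, G x y z = G y z x
  swap : ∀ x y z, G x y z = G x z y
  rect : ∀ x y z t, G x y z ≤ G x t t * G t y z

def GMConv {Z : Type*} (G : Z → Z → Z → ℝ) (x : ℕ → Z) (p : Z) : Prop :=
  ∀ ε : ℝ, 1 < ε → ∃ N : ℕ, ∀ n ≥ N, ∀ m ≥ N, G (x n) (x m) p < ε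

def GMCauchy {Z : Type*} (G : Z → Z → Z → ℝ) (x : ℕ → Z) : Prop :=
  ∀ ε : ℝ, 1 < ε → ∃ N : ℕ, ∀ n ≥ N, ∀ m ≥ N, ∀ l ≥ N, G (x n) (x m) (x l) < ε

def GMComplete {Z : Type*} (G : Z → Z → Z → ℝ) : Prop :=
  ∀ x : ℕ → Z, GMCauchy G x → ∃ p : Z, GMConv G x p

def GMBall {Z : Type*} (G : Z → Z → Z → ℝ) (x₀ : Z) (γ : ℝ) : Set Z :=
  {ρ | G x₀ ρ ρ ≤ γ}

/-!
Picard iteration from `x₀`. Writing `dₙ = G(xₙ, xₙ₊₁, xₙ₊₁)`, the contraction gives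
`dₙ ≤ γ ^ ((1 - η) ηⁿ)` as long as the iterates stay in the ball, and the rectangular inequality
telescopes these into `G(xₙ, xₙ₊ₖ, xₙ₊ₖ) ≤ γ ^ (ηⁿ - ηⁿ⁺ᵏ)`; for `n = 0` this keeps every iterate
in the ball, and in general it makes the iterates Cauchy. Their limit lies in the (closed) ball and
is fixed by the contraction. A second fixed point `y` in the ball would satisfy
`G(y, x*, x*) ≤ G(y, x*, x*) ^ η` with `η < 1`, forcing `y = x*`.
-/

open Filter Topology

namespace IsMultGMetric

variable {Z : Type*} {G : Z → Z → Z → ℝ}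

theorem one_le (hG : IsMultGMetric G) (x y z : Z) : 1 ≤ G x y z := by
  by_cases hyz : y = z
  · subst hyz
    by_cases hxy : x = y
    · exact (hG.eq_one x y y hxy rfl).ge
    · rw [hG.perm]
      exact (hG.one_lt y x (Ne.symm hxy)).le
  · by_cases hxy : x = y
    · subst hxy
      exact (hG.eq_one x x x rfl rfl).symm.le.trans (hG.le_of_ne x x z hyz)
    · exact (hG.one_lt x y hxy).le.trans (hG.le_of_ne x y z hyz)

theorem eq_of_le_one (hG : IsMultGMetric G) {x y : Z} (h : G x y y ≤ 1) : x = y := by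
  by_contra hxy
  have := hG.one_lt y x (Ne.symm hxy)
  rw [hG.perm] at h
  linarith

theorem eq_of_le_rpow (hG : IsMultGMetric G) {x y : Z} {η : ℝ} (hη : η < 1)
    (h : G x y y ≤ G x y y ^ η) : x = y := by
  refine hG.eq_of_le_one (not_lt.1 fun hlt => ?_)
  have := Real.rpow_lt_rpow_of_exponent_lt hlt hη
  rw [Real.rpow_one] at this
  linarith

theorem le_sq_symm (hG : IsMultGMetric G) (x y : Z) : G x y y ≤ G y x x ^ 2 := by
  calc G x y y = G y y x := hG.perm x y y
    _ ≤ G y x x * G x y x := hG.rect y y x x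
    _ = G y x x ^ 2 := by rw [hG.swap x y x, ← hG.perm y x x, sq]

theorem le_mul_mul_center (hG : IsMultGMetric G) (x y z t : Z) :
    G x y z ≤ G x t t * G y t t * G z t t := by
  have hyz : G t y z ≤ G y t t * G z t t := by
    calc G t y z = G y z t := hG.perm t y z
      _ ≤ G y t t * G t z t := hG.rect y z t t
      _ = G y t t * G z t t := by rw [hG.perm t z t, hG.swap z t t]
  calc G x y z ≤ G x t t * G t y z := hG.rect x y z t
    _ ≤ G x t t * (G y t t * G z t t) := by gcongr; exact (hG.pos x t t).le
    _ = G x t t * G y t t * G z t t := by ring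

theorem tendsto_lim_seq_seq (hG : IsMultGMetric G) {x : ℕ → Z} {p : Z} (hx : GMConv G x p) :
    Tendsto (fun n => G p (x n) (x n)) atTop (𝓝 1) := by
  refine tendsto_order.2 ⟨fun a ha => Eventually.of_forall fun n => ha.trans_le (hG.one_le _ _ _),
    fun ε hε => ?_⟩
  obtain ⟨N, hN⟩ := hx ε hε
  filter_upwards [eventually_ge_atTop N] with n hn
  rw [hG.perm]
  exact hN n hn n hn

theorem tendsto_seq_lim_lim (hG : IsMultGMetric G) {x : ℕ → Z} {p : Z} (hx : GMConv G x p) :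
    Tendsto (fun n => G (x n) p p) atTop (𝓝 1) := by
  have hsq : Tendsto (fun n => G p (x n) (x n) ^ 2) atTop (𝓝 1) := by
    simpa using (hG.tendsto_lim_seq_seq hx).pow 2
  exact tendsto_of_tendsto_of_tendsto_of_le_of_le tendsto_const_nhds hsq
    (fun n => hG.one_le _ _ _) (fun n => hG.le_sq_symm _ _)

theorem gmCauchy_of_le_of_tendsto_one (hG : IsMultGMetric G) {x : ℕ → Z} {b : ℕ → ℝ}
    (hb : Tendsto b atTop (𝓝 1)) (hle : ∀ N m, N ≤ m → G (x N) (x m) (x m) ≤ b N) :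
    GMCauchy G x := by
  have hb6 : Tendsto (fun N => b N ^ 6) atTop (𝓝 1) := by simpa using hb.pow 6
  intro ε hε
  obtain ⟨N, hN⟩ := (hb6.eventually_lt_const hε).exists
  have hcenter : ∀ m, N ≤ m → G (x m) (x N) (x N) ≤ b N ^ 2 := fun m hm =>
    (hG.le_sq_symm _ _).trans (pow_le_pow_left₀ (hG.pos _ _ _).le (hle N m hm) 2)
  refine ⟨N, fun n hn m hm l hl => ?_⟩
  calc G (x n) (x m) (x l)
      ≤ G (x n) (x N) (x N) * G (x m) (x N) (x N) * G (x l) (x N) (x N) :=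
        hG.le_mul_mul_center _ _ _ _
    _ ≤ b N ^ 2 * b N ^ 2 * b N ^ 2 := by
        gcongr
        · exact (hG.pos _ _ _).le
        · exact (hG.pos _ _ _).le
        all_goals exact hcenter _ ‹_›
    _ = b N ^ 6 := by ring
    _ < ε := hN

theorem mem_gmBall_of_gmConv (hG : IsMultGMetric G) {x : ℕ → Z} {p x₀ : Z} {γ : ℝ}
    (hball : ∀ n, x n ∈ GMBall G x₀ γ) (hx : GMConv G x p) : p ∈ GMBall G x₀ γ := by
  have hγ : Tendsto (fun n => γ * G (x n) p p) atTop (𝓝 γ) := by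
    simpa using (hG.tendsto_seq_lim_lim hx).const_mul γ
  refine ge_of_tendsto hγ (Eventually.of_forall fun n => ?_)
  calc G x₀ p p ≤ G x₀ (x n) (x n) * G (x n) p p := hG.rect x₀ p p (x n)
    _ ≤ γ * G (x n) p p := by gcongr; exacts [(hG.pos _ _ _).le, hball n]

theorem le_rpow_of_step_le (hG : IsMultGMetric G) {x : ℕ → Z} {γ η : ℝ} (hγ : 0 < γ) {n k : ℕ}
    (hstep : ∀ i < k,
      G (x (n + i)) (x (n + i + 1)) (x (n + i + 1)) ≤ γ ^ ((1 - η) * η ^ (n + i))) :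
    G (x n) (x (n + k)) (x (n + k)) ≤ γ ^ (η ^ n - η ^ (n + k)) := by
  induction k with
  | zero => simp [hG.eq_one]
  | succ k ih =>
    calc G (x n) (x (n + (k + 1))) (x (n + (k + 1)))
        ≤ G (x n) (x (n + k)) (x (n + k)) * G (x (n + k)) (x (n + k + 1)) (x (n + k + 1)) :=
          hG.rect _ _ _ _
      _ ≤ γ ^ (η ^ n - η ^ (n + k)) * γ ^ ((1 - η) * η ^ (n + k)) :=
          mul_le_mul (ih fun i hi => hstep i (by omega)) (hstep k (by omega)) (hG.pos _ _ _).le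
            (by positivity)
      _ = γ ^ (η ^ n - η ^ (n + (k + 1))) := by
          rw [← Real.rpow_add hγ]
          ring_nf

section Picard

variable (hG : IsMultGMetric G) {F : Z → Z} {x₀ : Z} {η γ : ℝ}
include hG

theorem mem_gmBall_of_step_le {x : ℕ → Z} (hx0 : x 0 = x₀) (hη0 : 0 ≤ η) (hγ : 1 ≤ γ) {k : ℕ}
    (hstep : ∀ i < k, G (x i) (x (i + 1)) (x (i + 1)) ≤ γ ^ ((1 - η) * η ^ i)) :
    x k ∈ GMBall G x₀ γ := by
  have h := hG.le_rpow_of_step_le (n := 0) (one_pos.trans_le hγ) (by simpa using hstep)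
  simp only [zero_add, pow_zero, hx0] at h
  refine h.trans ((Real.rpow_le_rpow_of_exponent_le hγ ?_).trans_eq (Real.rpow_one γ))
  linarith [pow_nonneg hη0 k]

theorem iterate_step_le (hη0 : 0 ≤ η) (hγ : 1 ≤ γ)
    (hcontr : ∀ x ∈ GMBall G x₀ γ, ∀ y ∈ GMBall G x₀ γ, ∀ z ∈ GMBall G x₀ γ,
      G (F x) (F y) (F z) ≤ (G x y z) ^ η)
    (hstart : G x₀ (F x₀) (F x₀) ≤ γ ^ (1 - η)) (n : ℕ) :
    G (F^[n] x₀) (F^[n + 1] x₀) (F^[n + 1] x₀) ≤ γ ^ ((1 - η) * η ^ n) := by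
  induction n using Nat.strong_induction_on with
  | _ n ih =>
    rcases n with _ | n
    · simpa using hstart
    have hball : ∀ k ≤ n + 1, F^[k] x₀ ∈ GMBall G x₀ γ := fun k hk =>
      hG.mem_gmBall_of_step_le rfl hη0 hγ fun i hi => ih i (by omega)
    calc G (F^[n + 1] x₀) (F^[n + 1 + 1] x₀) (F^[n + 1 + 1] x₀)
        = G (F (F^[n] x₀)) (F (F^[n + 1] x₀)) (F (F^[n + 1] x₀)) := by
          simp only [Function.iterate_succ_apply']
      _ ≤ G (F^[n] x₀) (F^[n + 1] x₀) (F^[n + 1] x₀) ^ η :=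
          hcontr _ (hball n (by omega)) _ (hball _ le_rfl) _ (hball _ le_rfl)
      _ ≤ (γ ^ ((1 - η) * η ^ n)) ^ η := by
          gcongr
          · exact (hG.pos _ _ _).le
          · exact ih n (by omega)
      _ = γ ^ ((1 - η) * η ^ (n + 1)) := by
          rw [← Real.rpow_mul (by linarith)]
          ring_nf

theorem isFixedPt_of_gmConv_iterate {p : Z} (hη0 : 0 ≤ η)
    (hcontr : ∀ x ∈ GMBall G x₀ γ, ∀ y ∈ GMBall G x₀ γ, ∀ z ∈ GMBall G x₀ γ,
      G (F x) (F y) (F z) ≤ (G x y z) ^ η)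
    (hball : ∀ n, F^[n] x₀ ∈ GMBall G x₀ γ) (hp : GMConv G (fun n => F^[n] x₀) p) :
    Function.IsFixedPt F p := by
  have hpball := hG.mem_gmBall_of_gmConv hball hp
  have hnext : Tendsto (fun n => G p (F^[n + 1] x₀) (F^[n + 1] x₀)) atTop (𝓝 1) :=
    (hG.tendsto_lim_seq_seq hp).comp (tendsto_add_atTop_nat 1)
  have hcontr_lim : Tendsto (fun n => G (F^[n] x₀) p p ^ η) atTop (𝓝 1) := by
    simpa using (hG.tendsto_seq_lim_lim hp).rpow_const (Or.inr hη0)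
  have hlim := hnext.mul hcontr_lim
  rw [mul_one] at hlim
  refine (hG.eq_of_le_one (ge_of_tendsto hlim (Eventually.of_forall fun n => ?_))).symm
  calc G p (F p) (F p) ≤ G p (F^[n + 1] x₀) (F^[n + 1] x₀) * G (F^[n + 1] x₀) (F p) (F p) :=
        hG.rect _ _ _ _
    _ ≤ G p (F^[n + 1] x₀) (F^[n + 1] x₀) * G (F^[n] x₀) p p ^ η := by
        gcongr
        · exact (hG.pos _ _ _).le
        · rw [Function.iterate_succ_apply']
          exact hcontr _ (hball n) _ hpball _ hpball

end Picard

end IsMultGMetric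

theorem one_le_of_one_le_rpow {γ r : ℝ} (hγ : 0 < γ) (hr : 0 < r) (h : 1 ≤ γ ^ r) : 1 ≤ γ := by
  by_contra! hlt
  exact (Real.rpow_lt_one hγ.le hlt hr).not_ge h

theorem corollary_3_2_general {L : Type*} [PartialOrder L]
    (G : L → L → L → ℝ) (hG : IsMultGMetric G) (hcomp : GMComplete G)
    (F : L → L) (x₀ : L) (η γ : ℝ)
    (hη0 : 0 ≤ η) (hη1 : η < 1) (hγ : 0 < γ)
    (hcontr : ∀ x ∈ GMBall G x₀ γ, ∀ y ∈ GMBall G x₀ γ, ∀ z ∈ GMBall G x₀ γ,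
      G (F x) (F y) (F z) ≤ (G x y z) ^ η)
    (hstart : G x₀ (F x₀) (F x₀) ≤ γ ^ (1 - η)) :
    ∃ xs ∈ GMBall G x₀ γ, F xs = xs ∧ G xs xs xs = 1 ∧
      ((∀ u ∈ GMBall G x₀ γ, ∀ v ∈ GMBall G x₀ γ,
          ∃ t ∈ GMBall G x₀ γ, t ≤ u ∧ t ≤ v) →
        ∀ y ∈ GMBall G x₀ γ, F y = y → y = xs) := by
  have hγ1 : 1 ≤ γ :=
    one_le_of_one_le_rpow hγ (by linarith) ((hG.one_le _ _ _).trans hstart)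
  have hstep := hG.iterate_step_le hη0 hγ1 hcontr hstart
  have hball : ∀ n, F^[n] x₀ ∈ GMBall G x₀ γ := fun n =>
    hG.mem_gmBall_of_step_le rfl hη0 hγ1 fun i _ => hstep i
  have hbound : ∀ N m, N ≤ m → G (F^[N] x₀) (F^[m] x₀) (F^[m] x₀) ≤ γ ^ η ^ N := by
    intro N m hNm
    obtain ⟨k, rfl⟩ := Nat.exists_eq_add_of_le hNm
    refine (hG.le_rpow_of_step_le (x := fun n => F^[n] x₀) hγ fun i _ => hstep (N + i)).trans
      (Real.rpow_le_rpow_of_exponent_le hγ1 ?_)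
    linarith [pow_nonneg hη0 (N + k)]
  have hlim : Tendsto (fun N : ℕ => γ ^ η ^ N) atTop (𝓝 1) := by
    simpa [Function.comp_def] using ((Real.continuousAt_const_rpow hγ.ne').tendsto).comp
      (tendsto_pow_atTop_nhds_zero_of_lt_one hη0 hη1)
  obtain ⟨p, hp⟩ := hcomp _ (hG.gmCauchy_of_le_of_tendsto_one hlim hbound)
  have hpball := hG.mem_gmBall_of_gmConv hball hp
  have hfix := (hG.isFixedPt_of_gmConv_iterate hη0 hcontr hball hp).eq
  refine ⟨p, hpball, hfix, hG.eq_one p p p rfl rfl, fun _ y hy hFy => hG.eq_of_le_rpow hη1 ?_⟩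
  simpa [hFy, hfix] using hcontr y hy p hpball p hpball

theorem corollary_3_2 {L : Type*} [Nonempty L] [PartialOrder L]
    (G : L → L → L → ℝ) (hG : IsMultGMetric G) (hcomp : GMComplete G)
    (F : L → L) (x₀ : L) (η γ : ℝ)
    (hη0 : 0 ≤ η) (hη1 : η < 1) (hγ : 0 < γ)
    (hdec : ∀ x : L, F x ≤ x)
    (hcontr : ∀ x ∈ GMBall G x₀ γ, ∀ y ∈ GMBall G x₀ γ, ∀ z ∈ GMBall G x₀ γ,
      G (F x) (F y) (F z) ≤ (G x y z) ^ η)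
    (hstart : G x₀ (F x₀) (F x₀) ≤ γ ^ (1 - η))
    (hmono : ∀ (x : ℕ → L) (s : L), (∀ n, x (n + 1) ≤ x n) → GMConv G x s →
      ∀ n, s ≤ x n) :
    ∃ xs ∈ GMBall G x₀ γ, F xs = xs ∧ G xs xs xs = 1 ∧
      ((∀ u ∈ GMBall G x₀ γ, ∀ v ∈ GMBall G x₀ γ,
          ∃ t ∈ GMBall G x₀ γ, t ≤ u ∧ t ≤ v) →
        ∀ y ∈ GMBall G x₀ γ, F y = y → y = xs) :=
  corollary_3_2_general G hG hcomp F x₀ η γ hη0 hη1 hγ hcontr hstart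
end

section
/- (Corollary 3.5.) Let L be a nonempty set with a partial order ≼ and a multiplicative metric d such that (L, d) is complete. Let F : L → L, x₀ ∈ L, η ∈ [0,1) and γ > 0. Assume: (i) F x ≼ x for every x ∈ L; (ii) d(Fx, Fy) ≤ d(x,y)^η for all x, y in the closed ball B̄(x₀, γ); (iii) d(x₀, Fx₀) ≤ γ^{1−η}; (iv) whenever a nonincreasing sequence (x_n) multiplicative-converges to a point s, then s ≼ x_n for every n. Then there exists x* ∈ B̄(x₀, γ) with F x* = x* and d(x*, x*) = 1. Moreover, if every two points of B̄(x₀, γ) have a lower bound belonging to B̄(x₀, γ), then x* is the unique fixed point of F in B̄(x₀, γ). -/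
structure IsMultMetric {Z : Type*} (d : Z → Z → ℝ) : Prop where
  one_le : ∀ x y, 1 ≤ d x y
  eq_one_iff : ∀ x y, d x y = 1 ↔ x = y
  symm : ∀ x y, d x y = d y x
  triangle : ∀ x y z, d x y ≤ d x z * d z y

def MConv {Z : Type*} (d : Z → Z → ℝ) (x : ℕ → Z) (p : Z) : Prop :=
  Filter.Tendsto (fun n => d (x n) p) Filter.atTop (nhds 1)

def MCauchy {Z : Type*} (d : Z → Z → ℝ) (x : ℕ → Z) : Prop :=
  ∀ ε : ℝ, 1 < ε → ∃ N : ℕ, ∀ n ≥ N, ∀ m ≥ N, d (x n) (x m) < ε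

def MComplete {Z : Type*} (d : Z → Z → ℝ) : Prop :=
  ∀ x : ℕ → Z, MCauchy d x → ∃ p : Z, MConv d x p

def MBall {Z : Type*} (d : Z → Z → ℝ) (x₀ : Z) (γ : ℝ) : Set Z :=
  {y | d x₀ y ≤ γ}

/-! Taking logarithms turns the multiplicative metric `d` into an ordinary metric `log ∘ d`, in which
the multiplicative ball `B̄(x₀, γ)` is the closed ball of radius `log γ`, the hypothesis
`d(Fx, Fy) ≤ d(x, y)^η` says that `F` is `η`-Lipschitz on it, and `d(x₀, Fx₀) ≤ γ^(1-η)` says that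
`F` moves the centre by at most `(1 - η) log γ`. These force `F` to map the ball into itself, so
Banach's fixed-point theorem applies on this closed subset of a complete space; uniqueness in the
ball is the usual contraction argument. -/

open Metric Set Function Filter Topology
open scoped NNReal

namespace LipschitzOnWith

variable {α : Type*} {f : α → α} {K : ℝ≥0} {x₀ : α} {r : ℝ}

theorem mapsTo_closedBall [PseudoMetricSpace α] (hf : LipschitzOnWith K f (closedBall x₀ r))
    (h₀ : dist x₀ (f x₀) ≤ (1 - K) * r) : MapsTo f (closedBall x₀ r) (closedBall x₀ r) := by
  intro x hx
  have hr : 0 ≤ r := dist_nonneg.trans hx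
  rw [mem_closedBall] at hx ⊢
  calc dist (f x) x₀ ≤ dist (f x) (f x₀) + dist (f x₀) x₀ := dist_triangle _ _ _
    _ ≤ K * dist x x₀ + (1 - K) * r :=
        add_le_add (hf.dist_le_mul x (mem_closedBall.2 hx) x₀ (mem_closedBall_self hr))
          (by rwa [dist_comm])
    _ ≤ K * r + (1 - K) * r := by gcongr
    _ = r := by ring

theorem exists_isFixedPt_closedBall [MetricSpace α] [CompleteSpace α] (hK : K < 1)
    (hf : LipschitzOnWith K f (closedBall x₀ r)) (h₀ : dist x₀ (f x₀) ≤ (1 - K) * r) :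
    ∃ x ∈ closedBall x₀ r, IsFixedPt f x := by
  have hK' : (0 : ℝ) < 1 - K := sub_pos.2 (by exact_mod_cast hK)
  have hr : 0 ≤ r := nonneg_of_mul_nonneg_right (dist_nonneg.trans h₀) hK'
  have hmaps := hf.mapsTo_closedBall h₀
  obtain ⟨x, hx, hfix, -⟩ := ContractingWith.exists_fixedPoint' isClosed_closedBall.isComplete
    hmaps ⟨hK, hmaps.lipschitzOnWith_iff_restrict.1 hf⟩ (mem_closedBall_self hr) (edist_ne_top _ _)
  exact ⟨x, hx, hfix⟩

theorem eq_of_isFixedPt [MetricSpace α] {s : Set α} (hK : K < 1) (hf : LipschitzOnWith K f s)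
    {x y : α} (hx : x ∈ s) (hy : y ∈ s) (hfx : IsFixedPt f x) (hfy : IsFixedPt f y) : x = y := by
  have hK' : (K : ℝ) < 1 := by exact_mod_cast hK
  have hle : dist x y ≤ K * dist x y := by simpa [hfx.eq, hfy.eq] using hf.dist_le_mul x hx y hy
  exact dist_le_zero.1 (by nlinarith [dist_nonneg (x := x) (y := y)])

end LipschitzOnWith

namespace IsMultMetric

variable {Z : Type*} {d : Z → Z → ℝ}

theorem pos (hd : IsMultMetric d) (x y : Z) : 0 < d x y :=
  zero_lt_one.trans_le (hd.one_le x y)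

theorem self_eq_one (hd : IsMultMetric d) (x : Z) : d x x = 1 :=
  (hd.eq_one_iff x x).2 rfl

noncomputable abbrev toMetricSpace (hd : IsMultMetric d) : MetricSpace Z where
  dist x y := Real.log (d x y)
  dist_self x := by simp [hd.self_eq_one]
  dist_comm x y := by rw [hd.symm]
  dist_triangle x y z := by
    rw [← Real.log_mul (hd.pos x y).ne' (hd.pos y z).ne']
    exact Real.log_le_log (hd.pos x z) (hd.triangle x z y)
  eq_of_dist_eq_zero {x y} h :=
    (hd.eq_one_iff x y).1 (Real.eq_one_of_pos_of_log_eq_zero (hd.pos x y) h)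

variable [MetricSpace Z] (hd : IsMultMetric d) (hdist : ∀ x y, dist x y = Real.log (d x y))
include hd hdist

theorem mBall_eq_closedBall {x₀ : Z} {γ : ℝ} (hγ : 0 < γ) :
    MBall d x₀ γ = closedBall x₀ (Real.log γ) := by
  ext y
  rw [mem_closedBall, dist_comm, hdist, Real.log_le_log_iff (hd.pos x₀ y) hγ]
  rfl

theorem completeSpace (hc : MComplete d) : CompleteSpace Z := by
  refine complete_of_cauchySeq_tendsto fun u hu => ?_
  have hcauchy : MCauchy d u := by
    intro ε hε
    obtain ⟨N, hN⟩ := Metric.cauchySeq_iff.1 hu (Real.log ε) (Real.log_pos hε)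
    refine ⟨N, fun m hm n hn => ?_⟩
    have := hN m hm n hn
    rwa [hdist, Real.log_lt_log_iff (hd.pos _ _) (by linarith)] at this
  obtain ⟨p, hp⟩ := hc u hcauchy
  refine ⟨p, tendsto_iff_dist_tendsto_zero.2 ?_⟩
  simpa only [hdist, Real.log_one] using hp.log one_ne_zero

theorem lipschitzOnWith_of_le_rpow {F : Z → Z} {s : Set Z} {η : ℝ≥0}
    (hF : ∀ x ∈ s, ∀ y ∈ s, d (F x) (F y) ≤ d x y ^ (η : ℝ)) : LipschitzOnWith η F s := by
  refine LipschitzOnWith.of_dist_le_mul fun x hx y hy => ?_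
  rw [hdist, hdist, ← Real.log_rpow (hd.pos x y)]
  exact Real.log_le_log (hd.pos _ _) (hF x hx y hy)

theorem dist_le_of_le_rpow {x y : Z} {γ η : ℝ} (hγ : 0 < γ) (h : d x y ≤ γ ^ η) :
    dist x y ≤ η * Real.log γ := by
  rw [hdist, ← Real.log_rpow hγ]
  exact Real.log_le_log (hd.pos x y) h

end IsMultMetric

theorem corollary_3_5_general {L : Type*} [PartialOrder L]
    (d : L → L → ℝ) (hd : IsMultMetric d) (hcomp : MComplete d)
    (F : L → L) (x₀ : L) (η γ : ℝ)
    (hη0 : 0 ≤ η) (hη1 : η < 1) (hγ : 0 < γ)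
    (hcontr : ∀ x ∈ MBall d x₀ γ, ∀ y ∈ MBall d x₀ γ,
      d (F x) (F y) ≤ (d x y) ^ η)
    (hstart : d x₀ (F x₀) ≤ γ ^ (1 - η)) :
    ∃ xs ∈ MBall d x₀ γ, F xs = xs ∧ d xs xs = 1 ∧
      ((∀ u ∈ MBall d x₀ γ, ∀ v ∈ MBall d x₀ γ,
          ∃ t ∈ MBall d x₀ γ, t ≤ u ∧ t ≤ v) →
        ∀ y ∈ MBall d x₀ γ, F y = y → y = xs) := by
  let _ := hd.toMetricSpace
  have hdist : ∀ x y, dist x y = Real.log (d x y) := fun _ _ => rfl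
  have _ := hd.completeSpace hdist hcomp
  rw [hd.mBall_eq_closedBall hdist hγ] at hcontr ⊢
  have hF : LipschitzOnWith ⟨η, hη0⟩ F (closedBall x₀ (Real.log γ)) :=
    hd.lipschitzOnWith_of_le_rpow hdist hcontr
  have hK : (⟨η, hη0⟩ : ℝ≥0) < 1 := hη1
  obtain ⟨xs, hxs, hfix⟩ :=
    hF.exists_isFixedPt_closedBall hK (hd.dist_le_of_le_rpow hdist hγ hstart)
  exact ⟨xs, hxs, hfix, hd.self_eq_one xs,
    fun _ y hy hFy => hF.eq_of_isFixedPt hK hy hxs hFy hfix⟩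

theorem corollary_3_5 {L : Type*} [Nonempty L] [PartialOrder L]
    (d : L → L → ℝ) (hd : IsMultMetric d) (hcomp : MComplete d)
    (F : L → L) (x₀ : L) (η γ : ℝ)
    (hη0 : 0 ≤ η) (hη1 : η < 1) (hγ : 0 < γ)
    (hdec : ∀ x : L, F x ≤ x)
    (hcontr : ∀ x ∈ MBall d x₀ γ, ∀ y ∈ MBall d x₀ γ,
      d (F x) (F y) ≤ (d x y) ^ η)
    (hstart : d x₀ (F x₀) ≤ γ ^ (1 - η))
    (hmono : ∀ (x : ℕ → L) (s : L), (∀ n, x (n + 1) ≤ x n) → MConv d x s →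
      ∀ n, s ≤ x n) :
    ∃ xs ∈ MBall d x₀ γ, F xs = xs ∧ d xs xs = 1 ∧
      ((∀ u ∈ MBall d x₀ γ, ∀ v ∈ MBall d x₀ γ,
          ∃ t ∈ MBall d x₀ γ, t ≤ u ∧ t ≤ v) →
        ∀ y ∈ MBall d x₀ γ, F y = y → y = xs) :=
  corollary_3_5_general d hd hcomp F x₀ η γ hη0 hη1 hγ hcontr hstart
end
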